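/- arXiv:1410.2282 — 7 statements merged into one kernel-verified Lean document; each statement's English description precedes it below -/
import Mathlib

section
/- Let h be a positive solution of Lh = −λh on ℝ with h(0) = 1, and suppose the scale integral B := ∫_{−∞}^0 (1/h²(y))·exp(−∫₀^y 2k(z)/σ²(z) dz) dy is finite and D := ∫₀^∞ (1/h²(y))·exp(−∫₀^y 2k(z)/σ²(z) dz) dy = ∞. Then the general solution of Lh = −λh normalized to value 1 at 0 is h_c(x) = h(x)·((1−c) + (c/B)·S((−∞,x])) where S is the scale measure with respect to h, and h_c is positive on ℝ if and only if 0 ≤ c ≤ 1. -/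
open Real MeasureTheory Set Filter Topology

/-!
For two solutions `g, h` of `y'' = p y' + q y`, Abel's identity `W' = p W` for the Wronskian
`W = g' h - g h'` gives `W = W(0) exp (∫₀ˣ p)`. With `p = -2k/σ²` this makes
`(g / h)' = W / h² = W(0) w`, `w` the density of the scale measure, so
`g / h = 1 + W(0) ∫₀ˣ w`, which is `h_c` with `c = W(0) B`.
Positivity of `h_c` means `(1 - c) + (c / B) S((-∞, x]) > 0` for all `x`; since
`S((-∞, x])` tends to `0` at `-∞` (`B < ∞`) and is unbounded at `+∞` (`D = ∞`),
this holds exactly when `0 ≤ c ≤ 1`.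
-/

section ReductionOfOrder

variable {p q g h : ℝ → ℝ}

theorem hasDerivAt_wronskian (hg : ContDiff ℝ 2 g) (hh : ContDiff ℝ 2 h) {x : ℝ}
    (hg'' : deriv (deriv g) x = p x * deriv g x + q x * g x)
    (hh'' : deriv (deriv h) x = p x * deriv h x + q x * h x) :
    HasDerivAt (fun x => deriv g x * h x - g x * deriv h x)
      (p x * (deriv g x * h x - g x * deriv h x)) x := by
  have hg' := (hg.differentiable_deriv_two x).hasDerivAt
  have hh' := (hh.differentiable_deriv_two x).hasDerivAt
  have hg1 := (hg.differentiable two_ne_zero x).hasDerivAt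
  have hh1 := (hh.differentiable two_ne_zero x).hasDerivAt
  refine ((hg'.mul hh1).sub (hg1.mul hh')).congr_deriv ?_
  rw [hg'', hh'']
  ring

theorem eq_mul_exp_integral_of_hasDerivAt {f : ℝ → ℝ} (hp : Continuous p)
    (hf : ∀ x, HasDerivAt f (p x * f x) x) (x : ℝ) :
    f x = f 0 * exp (∫ t in (0 : ℝ)..x, p t) := by
  set P : ℝ → ℝ := fun x => ∫ t in (0 : ℝ)..x, p t
  have hP : ∀ x, HasDerivAt P (p x) x := fun x => (hp.integral_hasStrictDerivAt 0 x).hasDerivAt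
  have hconst : ∀ x, HasDerivAt (fun x => f x * exp (-P x)) 0 x := fun x =>
    ((hf x).mul (hP x).neg.exp).congr_deriv (by ring)
  have := is_const_of_deriv_eq_zero (fun x => (hconst x).differentiableAt)
    (fun x => (hconst x).deriv) x 0
  simp only [P, intervalIntegral.integral_same, neg_zero, exp_zero, mul_one] at this
  rw [← this, mul_assoc, ← exp_add, neg_add_cancel, exp_zero, mul_one]

theorem continuous_exp_integral_div_sq (hp : Continuous p) (hh : Continuous h)
    (hne : ∀ x, h x ≠ 0) : Continuous fun t => exp (∫ s in (0 : ℝ)..t, p s) / h t ^ 2 :=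
  (continuous_exp.comp (intervalIntegral.continuous_primitive
    (fun a b => hp.intervalIntegrable a b) 0)).div (hh.pow 2) fun t => pow_ne_zero 2 (hne t)

theorem div_sub_div_eq_wronskian_mul_integral (hp : Continuous p) (hg : ContDiff ℝ 2 g)
    (hh : ContDiff ℝ 2 h) (hg'' : ∀ x, deriv (deriv g) x = p x * deriv g x + q x * g x)
    (hh'' : ∀ x, deriv (deriv h) x = p x * deriv h x + q x * h x) (hne : ∀ x, h x ≠ 0)
    (x : ℝ) :
    g x / h x - g 0 / h 0 = (deriv g 0 * h 0 - g 0 * deriv h 0) *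
      ∫ t in (0 : ℝ)..x, exp (∫ s in (0 : ℝ)..t, p s) / h t ^ 2 := by
  have hwronskian := eq_mul_exp_integral_of_hasDerivAt hp
    fun x => hasDerivAt_wronskian hg hh (hg'' x) (hh'' x)
  have hquot : ∀ t, HasDerivAt (fun t => g t / h t)
      ((deriv g 0 * h 0 - g 0 * deriv h 0) * (exp (∫ s in (0 : ℝ)..t, p s) / h t ^ 2)) t := by
    intro t
    refine ((hg.differentiable two_ne_zero t).hasDerivAt.div
      (hh.differentiable two_ne_zero t).hasDerivAt (hne t)).congr_deriv ?_
    rw [hwronskian t, mul_div_assoc]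
  have hcont := continuous_exp_integral_div_sq hp hh.continuous hne
  rw [← intervalIntegral.integral_const_mul, intervalIntegral.integral_eq_sub_of_hasDerivAt
    (fun t _ => hquot t) ((hcont.const_mul _).intervalIntegrable _ _)]

end ReductionOfOrder

theorem deriv_deriv_eq_of_ode {σ k r g : ℝ → ℝ} {lam x : ℝ} (hσ : σ x ≠ 0)
    (hg : (1/2) * σ x ^ 2 * deriv (deriv g) x + k x * deriv g x - r x * g x = -lam * g x) :
    deriv (deriv g) x = -(2 * k x / σ x ^ 2) * deriv g x + 2 * (r x - lam) / σ x ^ 2 * g x := by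
  field_simp
  linear_combination 2 * hg

section ScaleFunction

variable {w : ℝ → ℝ}

theorem Continuous.integrableOn_Iic_of_integrableOn_Iic (hw : Continuous w) {a : ℝ}
    (ha : IntegrableOn w (Iic a)) (b : ℝ) : IntegrableOn w (Iic b) := by
  rcases le_total b a with hba | hab
  · exact ha.mono_set (Iic_subset_Iic.2 hba)
  · rw [← Iic_union_Ioc_eq_Iic hab]
    exact ha.union hw.integrableOn_Ioc

theorem setIntegral_Iic_pos (hw : ∀ x, 0 < w x) {x : ℝ} (hx : IntegrableOn w (Iic x)) :
    0 < ∫ y in Iic x, w y := by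
  rw [setIntegral_pos_iff_support_of_nonneg_ae (ae_of_all _ fun y => (hw y).le) hx,
    show Function.support w = univ from eq_univ_of_forall fun y => (hw y).ne', univ_inter,
    volume_Iic]
  exact ENNReal.zero_lt_top

theorem not_bddAbove_range_setIntegral_Iic (hw : Continuous w) (hnn : ∀ x, 0 ≤ w x)
    (hB : IntegrableOn w (Iic 0)) (hD : ¬ IntegrableOn w (Ici 0)) :
    ¬ BddAbove (range fun x => ∫ y in Iic x, w y) := by
  rintro ⟨M, hM⟩
  apply hD
  rw [integrableOn_Ici_iff_integrableOn_Ioi]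
  refine integrableOn_Ioi_of_intervalIntegral_norm_bounded (l := atTop)
    (M - ∫ y in Iic 0, w y) 0 (fun i => hw.integrableOn_Ioc) tendsto_id (.of_forall fun i => ?_)
  have hnorm : ∫ y in (0 : ℝ)..i, ‖w y‖ = (∫ y in Iic i, w y) - ∫ y in Iic 0, w y := by
    rw [intervalIntegral.integral_Iic_sub_Iic hB (hw.integrableOn_Iic_of_integrableOn_Iic hB i)]
    exact intervalIntegral.integral_congr fun y _ => norm_of_nonneg (hnn y)
  have hi : ∫ y in Iic i, w y ≤ M := hM (mem_range_self i)
  simp only [id, hnorm]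
  linarith

end ScaleFunction

theorem forall_pos_one_sub_add_iff {α : Type*} {l : Filter α} [l.NeBot] {J : α → ℝ}
    {B c : ℝ} (hB : 0 < B) (hJ : ∀ x, 0 < J x) (hlim : Tendsto J l (𝓝 0))
    (hunbdd : ¬ BddAbove (range J)) :
    (∀ x, 0 < (1 - c) + c / B * J x) ↔ 0 ≤ c ∧ c ≤ 1 := by
  constructor
  · intro hpos
    constructor
    · by_contra! hc
      obtain ⟨_, ⟨x, rfl⟩, hx⟩ := not_bddAbove_iff.1 hunbdd (B * (1 - c) / -c)
      have : c / B * J x < -(1 - c) :=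
        calc c / B * J x < c / B * (B * (1 - c) / -c) :=
              mul_lt_mul_of_neg_left hx (div_neg_of_neg_of_pos hc hB)
          _ = -(1 - c) := by field_simp [hc.ne]
      linarith [hpos x]
    · have hlim' : Tendsto (fun x => (1 - c) + c / B * J x) l (𝓝 (1 - c)) := by
        simpa using (hlim.const_mul (c / B)).const_add (1 - c)
      linarith [ge_of_tendsto hlim' (.of_forall fun x => (hpos x).le)]
  · rintro ⟨hc0, hc1⟩ x
    rcases hc0.eq_or_lt with rfl | hc
    · simp
    · have : 0 < c / B * J x := mul_pos (div_pos hc hB) (hJ x)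
      linarith

theorem stmt2_general (σ k r : ℝ → ℝ) (hσ : ContDiff ℝ 1 σ) (hk : ContDiff ℝ 1 k)
    (hσpos : ∀ x, 0 < σ x)
    (lam : ℝ) (h : ℝ → ℝ) (hh : ContDiff ℝ 2 h) (hpos : ∀ x, 0 < h x) (h01 : h 0 = 1)
    (hode : ∀ x,
      (1/2) * σ x ^ 2 * deriv (deriv h) x + k x * deriv h x - r x * h x = -lam * h x)
    (w : ℝ → ℝ)
    (hw : ∀ y, w y = (1 / (h y) ^ 2) *
      Real.exp (-∫ z in (0:ℝ)..y, 2 * k z / σ z ^ 2))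
    (hB : IntegrableOn w (Set.Iic 0) volume)
    (hD : ¬ IntegrableOn w (Set.Ici 0) volume)
    (B : ℝ) (hBval : B = ∫ y in Set.Iic (0:ℝ), w y) :
    (∀ g : ℝ → ℝ, ContDiff ℝ 2 g →
      (∀ x, (1/2) * σ x ^ 2 * deriv (deriv g) x + k x * deriv g x - r x * g x
          = -lam * g x) →
      g 0 = 1 →
      ∃ c : ℝ, ∀ x, g x = h x * ((1 - c) + (c / B) * ∫ y in Set.Iic x, w y)) ∧
    (∀ c : ℝ,
      (∀ x, 0 < h x * ((1 - c) + (c / B) * ∫ y in Set.Iic x, w y)) ↔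
      (0 ≤ c ∧ c ≤ 1)) := by
  have hσ2 : ∀ x, σ x ≠ 0 := fun x => (hσpos x).ne'
  set p : ℝ → ℝ := fun x => -(2 * k x / σ x ^ 2)
  have hp : Continuous p := ((continuous_const.mul hk.continuous).div (hσ.continuous.pow 2)
    fun x => pow_ne_zero 2 (hσ2 x)).neg
  have hwp : w = fun t => exp (∫ s in (0 : ℝ)..t, p s) / h t ^ 2 := by
    funext t
    rw [hw, intervalIntegral.integral_neg]
    ring
  have hwc : Continuous w :=
    hwp ▸ continuous_exp_integral_div_sq hp hh.continuous fun t => (hpos t).ne'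
  have hwpos : ∀ x, 0 < w x := fun x => hwp ▸ div_pos (exp_pos _) (pow_pos (hpos x) 2)
  have hIic := hwc.integrableOn_Iic_of_integrableOn_Iic hB
  have hBpos : 0 < B := hBval ▸ setIntegral_Iic_pos hwpos (hIic 0)
  constructor
  · intro g hg hodeg hg0
    refine ⟨(deriv g 0 * h 0 - g 0 * deriv h 0) * B, fun x => ?_⟩
    have hquot := div_sub_div_eq_wronskian_mul_integral (p := p)
      (q := fun x => 2 * (r x - lam) / σ x ^ 2) hp hg hh
      (fun x => deriv_deriv_eq_of_ode (hσ2 x) (hodeg x))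
      (fun x => deriv_deriv_eq_of_ode (hσ2 x) (hode x)) (fun x => (hpos x).ne') x
    rw [← hwp, ← intervalIntegral.integral_Iic_sub_Iic (hIic 0) (hIic x), ← hBval] at hquot
    rw [hg0, h01] at hquot ⊢
    field_simp [(hpos x).ne'] at hquot ⊢
    linear_combination hquot
  · intro c
    simp_rw [mul_pos_iff_of_pos_left (hpos _)]
    exact forall_pos_one_sub_add_iff (l := atBot) hBpos
      (fun x => setIntegral_Iic_pos hwpos (hIic x)) (tendsto_integral_Iic_zero tendsto_id)
      (not_bddAbove_range_setIntegral_Iic hwc (fun x => (hwpos x).le) hB hD)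

theorem stmt2 (σ k r : ℝ → ℝ) (hσ : ContDiff ℝ 1 σ) (hk : ContDiff ℝ 1 k)
    (hr : ContDiff ℝ 1 r) (hσpos : ∀ x, 0 < σ x)
    (lam : ℝ) (h : ℝ → ℝ) (hh : ContDiff ℝ 2 h) (hpos : ∀ x, 0 < h x) (h01 : h 0 = 1)
    (hode : ∀ x,
      (1/2) * σ x ^ 2 * deriv (deriv h) x + k x * deriv h x - r x * h x = -lam * h x)
    (w : ℝ → ℝ)
    (hw : ∀ y, w y = (1 / (h y) ^ 2) *
      Real.exp (-∫ z in (0:ℝ)..y, 2 * k z / σ z ^ 2))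
    (hB : IntegrableOn w (Set.Iic 0) volume)
    (hD : ¬ IntegrableOn w (Set.Ici 0) volume)
    (B : ℝ) (hBval : B = ∫ y in Set.Iic (0:ℝ), w y) :
    (∀ g : ℝ → ℝ, ContDiff ℝ 2 g →
      (∀ x, (1/2) * σ x ^ 2 * deriv (deriv g) x + k x * deriv g x - r x * g x
          = -lam * g x) →
      g 0 = 1 →
      ∃ c : ℝ, ∀ x, g x = h x * ((1 - c) + (c / B) * ∫ y in Set.Iic x, w y)) ∧
    (∀ c : ℝ,
      (∀ x, 0 < h x * ((1 - c) + (c / B) * ∫ y in Set.Iic x, w y)) ↔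
      (0 ≤ c ∧ c ≤ 1)) :=
  stmt2_general σ k r hσ hk hσpos lam h hh hpos h01 hode w hw hB hD B hBval
end

section
/- Let λ ≤ β̄ where β̄ is the supremum of μ for which Lh = −μh admits a positive solution with h(ξ)=1, and suppose the set of initial slopes C_λ = { h'(ξ) : Lh = −λh, h > 0, h(ξ) = 1 } is nonempty and bounded with infimum m_λ and supremum M_λ. Then C_λ is exactly the closed interval [m_λ, M_λ]; in particular, for every z with m_λ ≤ z ≤ M_λ there exists a positive solution h of Lh = −λh with h(ξ) = 1 and h'(ξ) = z. -/
/-!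
Let `J` be the connected component of `ξ` in `I`. By uniqueness for the linear ODE, a solution
on `J` is determined by its value and slope at `ξ`. So once two slopes `z₁ ≠ z₂` are admissible,
with solutions `h₁, h₂`, every admissible solution agrees on `J` with `h₁ + (z - z₁) w`,
where `w = (h₂ - h₁) / (z₂ - z₁)`; conversely such a function that is positive on `J` can be
continued by `h₁` off `J`. Hence `C_λ = {z | h₁ + (z - z₁) w > 0 on J}`. This set is convex,
being cut out by affine conditions, and closed: a limit point gives a solution that is `≥ 0`
on `J` and equals `1` at `ξ`, and a zero of it would be a double zero, forcing it to vanish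
on `J`. A nonempty bounded closed interval of reals is `[inf, sup]`.
-/

open Set Filter Topology TopologicalSpace

theorem eqOn_zero_of_secondOrder_linear {A B u u' : ℝ → ℝ} {a b x₀ : ℝ}
    (hA : ContinuousOn A (Icc a b)) (hB : ContinuousOn B (Icc a b))
    (hu : ∀ t ∈ Icc a b, HasDerivAt u (u' t) t)
    (hu' : ∀ t ∈ Icc a b, HasDerivAt u' (A t * u t + B t * u' t) t)
    (hx₀ : x₀ ∈ Icc a b) (h₀ : u x₀ = 0) (h₀' : u' x₀ = 0) :
    EqOn u 0 (Icc a b) := by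
  obtain ⟨Ca, hCa⟩ := isCompact_Icc.exists_bound_of_continuousOn hA
  obtain ⟨Cb, hCb⟩ := isCompact_Icc.exists_bound_of_continuousOn hB
  set v : ℝ → ℝ × ℝ → ℝ × ℝ := fun t p => (p.2, A t * p.1 + B t * p.2)
  set K : NNReal := 1 + (Ca.toNNReal + Cb.toNNReal)
  have hlip : ∀ t ∈ Icc a b, LipschitzOnWith K (v t) univ := by
    intro t ht
    have hA' : ‖A t‖₊ ≤ Ca.toNNReal := by
      rw [← norm_toNNReal]; exact Real.toNNReal_le_toNNReal (hCa t ht)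
    have hB' : ‖B t‖₊ ≤ Cb.toNNReal := by
      rw [← norm_toNNReal]; exact Real.toNNReal_le_toNNReal (hCb t ht)
    have hvt : LipschitzWith (max 1 (‖A t‖₊ * 1 + ‖B t‖₊ * 1)) (v t) :=
      LipschitzWith.prod_snd.prodMk
        (((lipschitzWith_smul (A t)).comp (LipschitzWith.prod_fst (α := ℝ) (β := ℝ))).add
          ((lipschitzWith_smul (B t)).comp (LipschitzWith.prod_snd (α := ℝ) (β := ℝ))))
    refine (hvt.weaken ?_).lipschitzOnWith
    simp only [mul_one]
    exact max_le le_self_add (le_add_left (add_le_add hA' hB'))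
  set f : ℝ → ℝ × ℝ := fun t => (u t, u' t)
  have hf : ∀ t ∈ Icc a b, HasDerivAt f (v t (f t)) t := fun t ht =>
    (hu t ht).prodMk (hu' t ht)
  have hfc : ContinuousOn f (Icc a b) := fun t ht => (hf t ht).continuousAt.continuousWithinAt
  have h0 : ∀ t, HasDerivAt (0 : ℝ → ℝ × ℝ) (v t 0) t := fun t => by
    rw [show v t 0 = 0 by simp [v]]
    exact hasDerivAt_const t 0
  have hf₀ : f x₀ = 0 := by simp [f, h₀, h₀']
  have hleft : EqOn f 0 (Icc a x₀) :=
    ODE_solution_unique_of_mem_Icc_left (fun t ht => hlip t ⟨ht.1.le, ht.2.trans hx₀.2⟩)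
      (hfc.mono (Icc_subset_Icc_right hx₀.2))
      (fun t ht => (hf t ⟨ht.1.le, ht.2.trans hx₀.2⟩).hasDerivWithinAt)
      (fun _ _ => mem_univ _) continuousOn_const (fun t _ => (h0 t).hasDerivWithinAt)
      (fun _ _ => mem_univ _) hf₀
  have hright : EqOn f 0 (Icc x₀ b) :=
    ODE_solution_unique_of_mem_Icc_right (fun t ht => hlip t ⟨hx₀.1.trans ht.1, ht.2.le⟩)
      (hfc.mono (Icc_subset_Icc_left hx₀.1))
      (fun t ht => (hf t ⟨hx₀.1.trans ht.1, ht.2.le⟩).hasDerivWithinAt)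
      (fun _ _ => mem_univ _) continuousOn_const (fun t _ => (h0 t).hasDerivWithinAt)
      (fun _ _ => mem_univ _) hf₀
  intro t ht
  rcases le_total t x₀ with htx | htx
  · exact congrArg Prod.fst (hleft ⟨ht.1, htx⟩)
  · exact congrArg Prod.fst (hright ⟨htx, ht.2⟩)

theorem IsOpen.diff_connectedComponentIn {X : Type*} [TopologicalSpace X]
    [LocallyConnectedSpace X] {I : Set X} (hI : IsOpen I) (ξ : X) :
    IsOpen (I \ connectedComponentIn I ξ) := by
  refine isOpen_iff_mem_nhds.2 fun x hx => mem_of_superset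
    (hI.connectedComponentIn.mem_nhds (mem_connectedComponentIn hx.1)) fun y hy =>
    ⟨connectedComponentIn_subset _ _ hy, fun hyξ => hx.2 ?_⟩
  rw [connectedComponentIn_eq hyξ, ← connectedComponentIn_eq hy]
  exact mem_connectedComponentIn hx.1

theorem ContDiffOn.differentiableAt_deriv {f : ℝ → ℝ} {s : Set ℝ} {x : ℝ}
    (hf : ContDiffOn ℝ 2 f s) (hs : IsOpen s) (hx : x ∈ s) :
    DifferentiableAt ℝ (deriv f) x :=
  ((hf.deriv_of_isOpen hs (by norm_num)).contDiffAt (hs.mem_nhds hx)).differentiableAt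
    one_ne_zero

theorem deriv_deriv_add_of_contDiffOn {f g : ℝ → ℝ} {s : Set ℝ} {x : ℝ}
    (hf : ContDiffOn ℝ 2 f s) (hg : ContDiffOn ℝ 2 g s) (hs : IsOpen s) (hx : x ∈ s) :
    deriv (deriv (f + g)) x = deriv (deriv f) x + deriv (deriv g) x := by
  have : deriv (f + g) =ᶠ[𝓝 x] deriv f + deriv g :=
    eventually_of_mem (hs.mem_nhds hx) fun y hy =>
      deriv_add ((hf.contDiffAt (hs.mem_nhds hy)).differentiableAt two_ne_zero)
        ((hg.contDiffAt (hs.mem_nhds hy)).differentiableAt two_ne_zero)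
  rw [this.deriv_eq,
    deriv_add (hf.differentiableAt_deriv hs hx) (hg.differentiableAt_deriv hs hx)]

/-- The domain is an open set so that `deriv` is local on it, which makes the solutions of
`L h = -λ h` a linear subspace. -/
def solutionSpace (U : Opens ℝ) (σ k r : ℝ → ℝ) (lam : ℝ) : Submodule ℝ (ℝ → ℝ) where
  carrier := {h | ContDiffOn ℝ 2 h U ∧ ∀ x ∈ U,
    (1/2) * σ x ^ 2 * deriv (deriv h) x + k x * deriv h x - r x * h x = -lam * h x}
  zero_mem' := ⟨contDiffOn_const, fun x _ => by simp⟩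
  add_mem' := by
    rintro f g ⟨hf, hfL⟩ ⟨hg, hgL⟩
    refine ⟨hf.add hg, fun x hx => ?_⟩
    have hfx := (hf.contDiffAt (U.isOpen.mem_nhds hx)).differentiableAt two_ne_zero
    have hgx := (hg.contDiffAt (U.isOpen.mem_nhds hx)).differentiableAt two_ne_zero
    rw [deriv_deriv_add_of_contDiffOn hf hg U.isOpen hx, deriv_add hfx hgx, Pi.add_apply]
    linear_combination hfL x hx + hgL x hx
  smul_mem' := by
    rintro c f ⟨hf, hfL⟩
    refine ⟨hf.const_smul c, fun x hx => ?_⟩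
    simp only [Pi.smul_apply, smul_eq_mul]
    rw [show c • f = fun y => c * f y from rfl, deriv_const_mul_field', deriv_const_mul_field']
    linear_combination c * hfL x hx

namespace solutionSpace

variable {U : Opens ℝ} {σ k r : ℝ → ℝ} {lam : ℝ} {g h : ℝ → ℝ} {x : ℝ}

theorem differentiableAt (hh : h ∈ solutionSpace U σ k r lam) (hx : x ∈ U) :
    DifferentiableAt ℝ h x :=
  (hh.1.contDiffAt (U.isOpen.mem_nhds hx)).differentiableAt two_ne_zero

theorem mem_of_eventuallyEq
    (hloc : ∀ x ∈ U, ∃ g ∈ solutionSpace U σ k r lam, h =ᶠ[𝓝 x] g) :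
    h ∈ solutionSpace U σ k r lam := by
  refine ⟨(U.isOpen.contDiffOn_iff).2 fun x hx => ?_, fun x hx => ?_⟩
  · obtain ⟨g, hg, hhg⟩ := hloc x hx
    exact (hg.1.contDiffAt (U.isOpen.mem_nhds hx)).congr_of_eventuallyEq hhg
  · obtain ⟨g, hg, hhg⟩ := hloc x hx
    rw [hhg.eq_of_nhds, hhg.deriv_eq, hhg.deriv.deriv_eq]
    exact hg.2 x hx

theorem piecewise_mem {J : Set ℝ} [DecidablePred (· ∈ J)] (hJ : IsOpen J)
    (hUJ : IsOpen ((U : Set ℝ) \ J)) (hg : g ∈ solutionSpace U σ k r lam)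
    (hh : h ∈ solutionSpace U σ k r lam) : J.piecewise g h ∈ solutionSpace U σ k r lam := by
  refine mem_of_eventuallyEq fun x hx => ?_
  by_cases hxJ : x ∈ J
  · exact ⟨g, hg, (J.piecewise_eqOn g h).eventuallyEq_of_mem (hJ.mem_nhds hxJ)⟩
  · exact ⟨h, hh, ((J.piecewise_eqOn_compl g h).mono
      (sdiff_subset_compl _ _)).eventuallyEq_of_mem (hUJ.mem_nhds ⟨hx, hxJ⟩)⟩

theorem deriv_deriv_eq (hσpos : ∀ x ∈ U, 0 < σ x) (hh : h ∈ solutionSpace U σ k r lam)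
    (hx : x ∈ U) :
    deriv (deriv h) x = 2 * (r x - lam) / σ x ^ 2 * h x + -(2 * k x) / σ x ^ 2 * deriv h x := by
  have := hσpos x hx
  field_simp
  linear_combination 2 * hh.2 x hx

theorem eqOn_zero (hσ : ContinuousOn σ U) (hk : ContinuousOn k U) (hr : ContinuousOn r U)
    (hσpos : ∀ x ∈ U, 0 < σ x) {J : Set ℝ} (hJ : IsPreconnected J) (hJU : J ⊆ U)
    (hh : h ∈ solutionSpace U σ k r lam) {x₀ : ℝ} (hx₀ : x₀ ∈ J) (h₀ : h x₀ = 0)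
    (h₀' : deriv h x₀ = 0) :
    EqOn h 0 J := by
  intro y hy
  have hsub : uIcc x₀ y ⊆ U := (hJ.ordConnected.uIcc_subset hx₀ hy).trans hJU
  have hσ2 : ∀ x ∈ U, σ x ^ 2 ≠ 0 := fun x hx => pow_ne_zero 2 (hσpos x hx).ne'
  refine eqOn_zero_of_secondOrder_linear (A := fun x => 2 * (r x - lam) / σ x ^ 2)
    (B := fun x => -(2 * k x) / σ x ^ 2) (u' := deriv h)
    ((ContinuousOn.div (by fun_prop) (by fun_prop) hσ2).mono hsub)
    ((ContinuousOn.div (by fun_prop) (by fun_prop) hσ2).mono hsub)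
    (fun t ht => (differentiableAt hh (hsub ht)).hasDerivAt) (fun t ht => ?_)
    left_mem_uIcc h₀ h₀' right_mem_uIcc
  rw [← deriv_deriv_eq hσpos hh (hsub ht)]
  exact (hh.1.differentiableAt_deriv U.isOpen (hsub ht)).hasDerivAt

theorem pos_of_nonneg (hσ : ContinuousOn σ U) (hk : ContinuousOn k U) (hr : ContinuousOn r U)
    (hσpos : ∀ x ∈ U, 0 < σ x) {J : Set ℝ} (hJo : IsOpen J) (hJ : IsPreconnected J)
    (hJU : J ⊆ U) (hh : h ∈ solutionSpace U σ k r lam) (hnn : ∀ x ∈ J, 0 ≤ h x) {ξ : ℝ}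
    (hξ : ξ ∈ J) (hξ0 : h ξ ≠ 0) :
    ∀ x ∈ J, 0 < h x := by
  intro x hx
  refine (hnn x hx).lt_of_ne fun hx0 => hξ0 ?_
  have hmin : IsLocalMin h x :=
    eventually_of_mem (hJo.mem_nhds hx) fun y hy => hx0 ▸ hnn y hy
  exact eqOn_zero hσ hk hr hσpos hJ hJU hh hx hx0.symm hmin.deriv_eq_zero hξ

end solutionSpace

/-- The set `C_λ` of initial slopes of positive normalised solutions. -/
def positiveSlopes (U : Opens ℝ) (σ k r : ℝ → ℝ) (lam ξ : ℝ) : Set ℝ :=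
  {z | ∃ h ∈ solutionSpace U σ k r lam, (∀ x ∈ U, 0 < h x) ∧ h ξ = 1 ∧ deriv h ξ = z}

section positiveSlopes

open solutionSpace

variable {U : Opens ℝ} {σ k r : ℝ → ℝ} {lam ξ : ℝ}

theorem positiveSlopes_eq_setOf (hσ : ContinuousOn σ U) (hk : ContinuousOn k U)
    (hr : ContinuousOn r U) (hσpos : ∀ x ∈ U, 0 < σ x) (hξ : ξ ∈ U) {h₁ w : ℝ → ℝ} {z₁ : ℝ}
    (h₁_mem : h₁ ∈ solutionSpace U σ k r lam) (h₁_pos : ∀ x ∈ U, 0 < h₁ x) (h₁ξ : h₁ ξ = 1)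
    (h₁ξ' : deriv h₁ ξ = z₁) (hw : w ∈ solutionSpace U σ k r lam) (hwξ : w ξ = 0)
    (hwξ' : deriv w ξ = 1) :
    positiveSlopes U σ k r lam ξ =
      {z | ∀ x ∈ connectedComponentIn U ξ, 0 < h₁ x + (z - z₁) * w x} := by
  set J := connectedComponentIn (U : Set ℝ) ξ
  have hξJ : ξ ∈ J := mem_connectedComponentIn hξ
  have hline : ∀ z, h₁ + (z - z₁) • w ∈ solutionSpace U σ k r lam := fun z =>
    add_mem h₁_mem (Submodule.smul_mem _ _ hw)
  have hline' : ∀ z, deriv (h₁ + (z - z₁) • w) ξ = z := fun z => by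
    rw [deriv_add (differentiableAt h₁_mem hξ) ((differentiableAt hw hξ).const_smul _),
      deriv_const_smul _ (differentiableAt hw hξ), h₁ξ', hwξ', smul_eq_mul, mul_one,
      add_sub_cancel]
  ext z
  constructor
  · rintro ⟨h, hh, hpos, hhξ, hhξ'⟩ x hx
    have hdiff : EqOn (h - (h₁ + (z - z₁) • w)) 0 J := by
      refine eqOn_zero hσ hk hr hσpos isPreconnected_connectedComponentIn
        (connectedComponentIn_subset _ _) (sub_mem hh (hline z)) hξJ ?_ ?_
      · simp [hhξ, h₁ξ, hwξ]
      · rw [deriv_sub (differentiableAt hh hξ) (differentiableAt (hline z) hξ), hline', hhξ',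
          sub_self]
    have hx' := hdiff hx
    simp only [Pi.sub_apply, Pi.add_apply, Pi.smul_apply, smul_eq_mul, Pi.zero_apply,
      sub_eq_zero] at hx'
    exact hx' ▸ hpos x (connectedComponentIn_subset _ _ hx)
  · intro hz
    classical
    refine ⟨J.piecewise (h₁ + (z - z₁) • w) h₁, piecewise_mem U.isOpen.connectedComponentIn
      (U.isOpen.diff_connectedComponentIn ξ) (hline z) h₁_mem, fun x hx => ?_, ?_, ?_⟩
    · by_cases hxJ : x ∈ J
      · rw [J.piecewise_eq_of_mem _ _ hxJ]; exact hz x hxJ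
      · rw [J.piecewise_eq_of_notMem _ _ hxJ]; exact h₁_pos x hx
    · rw [J.piecewise_eq_of_mem _ _ hξJ]; simp [h₁ξ, hwξ]
    · rw [((J.piecewise_eqOn _ _).eventuallyEq_of_mem
        (U.isOpen.connectedComponentIn.mem_nhds hξJ)).deriv_eq, hline']

theorem exists_positiveSlopes_eq_setOf (hσ : ContinuousOn σ U) (hk : ContinuousOn k U)
    (hr : ContinuousOn r U) (hσpos : ∀ x ∈ U, 0 < σ x) (hξ : ξ ∈ U)
    (hC : (positiveSlopes U σ k r lam ξ).Nontrivial) :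
    ∃ h₁ ∈ solutionSpace U σ k r lam, ∃ w ∈ solutionSpace U σ k r lam, ∃ z₁,
      h₁ ξ = 1 ∧ w ξ = 0 ∧ positiveSlopes U σ k r lam ξ =
        {z | ∀ x ∈ connectedComponentIn U ξ, 0 < h₁ x + (z - z₁) * w x} := by
  obtain ⟨_, ⟨h₁, h₁_mem, h₁_pos, h₁ξ, rfl⟩, _, ⟨h₂, h₂_mem, -, h₂ξ, rfl⟩, hne⟩ := hC
  set w := (deriv h₂ ξ - deriv h₁ ξ)⁻¹ • (h₂ - h₁)
  have hw : w ∈ solutionSpace U σ k r lam := Submodule.smul_mem _ _ (sub_mem h₂_mem h₁_mem)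
  have hwξ' : deriv w ξ = 1 := by
    rw [deriv_const_smul _ ((differentiableAt h₂_mem hξ).sub (differentiableAt h₁_mem hξ)),
      deriv_sub (differentiableAt h₂_mem hξ) (differentiableAt h₁_mem hξ), smul_eq_mul,
      inv_mul_cancel₀ (sub_ne_zero.2 hne.symm)]
  have hwξ : w ξ = 0 := by simp [w, h₁ξ, h₂ξ]
  exact ⟨h₁, h₁_mem, w, hw, _, h₁ξ, hwξ,
    positiveSlopes_eq_setOf hσ hk hr hσpos hξ h₁_mem h₁_pos h₁ξ rfl hw hwξ hwξ'⟩

theorem isClosed_positiveSlopes (hσ : ContinuousOn σ U) (hk : ContinuousOn k U)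
    (hr : ContinuousOn r U) (hσpos : ∀ x ∈ U, 0 < σ x) (hξ : ξ ∈ U) :
    IsClosed (positiveSlopes U σ k r lam ξ) := by
  rcases (positiveSlopes U σ k r lam ξ).subsingleton_or_nontrivial with hC | hC
  · exact hC.isClosed
  obtain ⟨h₁, h₁_mem, w, hw, z₁, h₁ξ, hwξ, hC⟩ :=
    exists_positiveSlopes_eq_setOf hσ hk hr hσpos hξ hC
  set J := connectedComponentIn (U : Set ℝ) ξ
  have hnn : closure {z | ∀ x ∈ J, 0 < h₁ x + (z - z₁) * w x} ⊆
      {z | ∀ x ∈ J, 0 ≤ h₁ x + (z - z₁) * w x} := by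
    refine closure_minimal (fun z hz x hx => (hz x hx).le) ?_
    simp only [ofPred_forall]
    exact isClosed_biInter fun x _ => isClosed_le continuous_const (by fun_prop)
  rw [hC]
  exact isClosed_of_closure_subset fun z hz => pos_of_nonneg hσ hk hr hσpos
    U.isOpen.connectedComponentIn isPreconnected_connectedComponentIn
    (connectedComponentIn_subset _ _) (add_mem h₁_mem (Submodule.smul_mem _ (z - z₁) hw))
    (hnn hz) (mem_connectedComponentIn hξ) (by simp [h₁ξ, hwξ])

theorem isPreconnected_positiveSlopes (hσ : ContinuousOn σ U) (hk : ContinuousOn k U)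
    (hr : ContinuousOn r U) (hσpos : ∀ x ∈ U, 0 < σ x) (hξ : ξ ∈ U) :
    IsPreconnected (positiveSlopes U σ k r lam ξ) := by
  rcases (positiveSlopes U σ k r lam ξ).subsingleton_or_nontrivial with hC | hC
  · exact hC.isPreconnected
  obtain ⟨h₁, -, w, -, z₁, -, -, hC⟩ := exists_positiveSlopes_eq_setOf hσ hk hr hσpos hξ hC
  rw [hC, isPreconnected_iff_ordConnected]
  refine ⟨fun a ha b hb z hz x hx => ?_⟩
  have ha' := ha x hx
  have hb' := hb x hx
  rcases le_total 0 (w x) with hw | hw <;> nlinarith [hz.1, hz.2]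

end positiveSlopes

theorem stmt3_general (I : Set ℝ) (hI : IsOpen I) (ξ : ℝ) (hξ : ξ ∈ I)
    (σ k r : ℝ → ℝ) (hσ : ContDiffOn ℝ 1 σ I) (hk : ContDiffOn ℝ 1 k I)
    (hr : ContDiffOn ℝ 1 r I) (hσpos : ∀ x ∈ I, 0 < σ x)
    (lam : ℝ)
    (C : Set ℝ)
    (hC : C = {z : ℝ | ∃ h : ℝ → ℝ, ContDiffOn ℝ 2 h I ∧
      (∀ x ∈ I, 0 < h x) ∧ h ξ = 1 ∧ deriv h ξ = z ∧
      (∀ x ∈ I, (1/2) * σ x ^ 2 * deriv (deriv h) x + k x * deriv h x - r x * h x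
        = -lam * h x)})
    (hne : C.Nonempty) (hbdda : BddAbove C) (hbddb : BddBelow C) :
    C = Set.Icc (sInf C) (sSup C) := by
  set U : Opens ℝ := ⟨I, hI⟩
  have hCU : C = positiveSlopes U σ k r lam ξ := by
    rw [hC]
    ext z
    exact ⟨fun ⟨h, hh, hpos, hh₁, hh', hL⟩ => ⟨h, ⟨hh, hL⟩, hpos, hh₁, hh'⟩,
      fun ⟨h, ⟨hh, hL⟩, hpos, hh₁, hh'⟩ => ⟨h, hh, hpos, hh₁, hh', hL⟩⟩
  subst hCU
  exact eq_Icc_csInf_csSup_of_connected_bdd_closed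
    ⟨hne, isPreconnected_positiveSlopes hσ.continuousOn hk.continuousOn hr.continuousOn
      hσpos hξ⟩
    hbddb hbdda
    (isClosed_positiveSlopes hσ.continuousOn hk.continuousOn hr.continuousOn hσpos hξ)

theorem stmt3 (I : Set ℝ) (hI : IsOpen I) (ξ : ℝ) (hξ : ξ ∈ I)
    (σ k r : ℝ → ℝ) (hσ : ContDiffOn ℝ 1 σ I) (hk : ContDiffOn ℝ 1 k I)
    (hr : ContDiffOn ℝ 1 r I) (hσpos : ∀ x ∈ I, 0 < σ x)
    (βbar : ℝ)
    (hβ : βbar = sSup {μ : ℝ | ∃ h : ℝ → ℝ, ContDiffOn ℝ 2 h I ∧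
      (∀ x ∈ I, 0 < h x) ∧ h ξ = 1 ∧
      (∀ x ∈ I, (1/2) * σ x ^ 2 * deriv (deriv h) x + k x * deriv h x - r x * h x
        = -μ * h x)})
    (lam : ℝ) (hlam : lam ≤ βbar)
    (C : Set ℝ)
    (hC : C = {z : ℝ | ∃ h : ℝ → ℝ, ContDiffOn ℝ 2 h I ∧
      (∀ x ∈ I, 0 < h x) ∧ h ξ = 1 ∧ deriv h ξ = z ∧
      (∀ x ∈ I, (1/2) * σ x ^ 2 * deriv (deriv h) x + k x * deriv h x - r x * h x
        = -lam * h x)})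
    (hne : C.Nonempty) (hbdda : BddAbove C) (hbddb : BddBelow C) :
    C = Set.Icc (sInf C) (sSup C) :=
  stmt3_general I hI ξ hξ σ k r hσ hk hr hσpos lam C hC hne hbdda hbddb
end

section
/- Let v : ℝ → ℝ be C¹ with v(0) = 1, and let Γ be a C¹ solution on ℝ of the Riccati-type equation Γ' = −Γ² − (2v'/v)Γ with Γ(0) > 0 and v > 0. Then Γ(x) ≥ 0 for all x, and for all x the identity 1/v²(x) = (Γ(x)/Γ(0))·exp(∫₀ˣ Γ(y) dy) holds. -/
/-! Along a solution, `Γ v² exp (∫₀ˣ Γ)` is a first integral of the equation: its derivative is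
`(Γ' + Γ² + (2v'/v) Γ) v² exp (∫₀ˣ Γ) = 0`. Hence `Γ x · v x² · exp (∫₀ˣ Γ) = Γ 0`, which forces
`Γ x > 0` and, after dividing by `Γ 0 · v x²`, gives the identity. -/

open Real intervalIntegral

theorem hasDerivAt_mul_sq_mul_exp_integral {Γ v : ℝ → ℝ} {Γ' v' x : ℝ} (a : ℝ)
    (hcont : Continuous Γ) (hΓ : HasDerivAt Γ Γ' x) (hv : HasDerivAt v v' x) (hvx : v x ≠ 0)
    (hode : Γ' = -Γ x ^ 2 - 2 * v' / v x * Γ x) :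
    HasDerivAt (fun u => Γ u * v u ^ 2 * exp (∫ y in a..u, Γ y)) 0 x := by
  have hI : HasDerivAt (fun u => ∫ y in a..u, Γ y) (Γ x) x :=
    (hcont.integral_hasStrictDerivAt a x).hasDerivAt
  refine ((hΓ.mul (hv.pow 2)).mul hI.exp).congr_deriv ?_
  simp only [Pi.mul_apply, Pi.pow_apply, hode]
  field_simp
  ring

theorem mul_sq_mul_exp_integral_eq {Γ v : ℝ → ℝ} (hΓ : Differentiable ℝ Γ)
    (hv : Differentiable ℝ v) (hvne : ∀ x, v x ≠ 0)
    (hode : ∀ x, deriv Γ x = -Γ x ^ 2 - 2 * deriv v x / v x * Γ x) (a x : ℝ) :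
    Γ x * v x ^ 2 * exp (∫ y in a..x, Γ y) = Γ a * v a ^ 2 := by
  have hderiv (u : ℝ) := hasDerivAt_mul_sq_mul_exp_integral a hΓ.continuous
    (hΓ u).hasDerivAt (hv u).hasDerivAt (hvne u) (hode u)
  have hconst := is_const_of_deriv_eq_zero (fun u => (hderiv u).differentiableAt)
    (fun u => (hderiv u).deriv) x a
  simpa using hconst

theorem stmt4 (v Γ : ℝ → ℝ) (hv : ContDiff ℝ 1 v) (hvpos : ∀ x, 0 < v x)
    (hv0 : v 0 = 1) (hΓ : ContDiff ℝ 1 Γ)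
    (hode : ∀ x, deriv Γ x = -(Γ x) ^ 2 - (2 * deriv v x / v x) * Γ x)
    (hΓ0 : 0 < Γ 0) :
    (∀ x, 0 ≤ Γ x) ∧
    (∀ x, 1 / (v x) ^ 2 = (Γ x / Γ 0) * Real.exp (∫ y in (0:ℝ)..x, Γ y)) := by
  have key (x : ℝ) : Γ x * (v x ^ 2 * exp (∫ y in (0:ℝ)..x, Γ y)) = Γ 0 := by
    rw [← mul_assoc, mul_sq_mul_exp_integral_eq (hΓ.differentiable one_ne_zero)
      (hv.differentiable one_ne_zero) (fun x => (hvpos x).ne') hode 0 x, hv0]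
    ring
  have hpos (x : ℝ) : 0 < Γ x := by
    have hprod : 0 < Γ x * (v x ^ 2 * exp (∫ y in (0:ℝ)..x, Γ y)) := key x ▸ hΓ0
    have hvx := hvpos x
    exact (pos_iff_pos_of_mul_pos hprod).mpr (by positivity)
  refine ⟨fun x => (hpos x).le, fun x => ?_⟩
  have hvx := hvpos x
  field_simp
  linarith [key x]
end

section
/- Let v > 0 be C¹ on ℝ with v(0)=1 and let Γ be a C¹ function on ℝ satisfying Γ' = −Γ² − (2v'/v)Γ with Γ(0) > 0. Then ∫_{−∞}^0 v^{−2}(y) dy = (1/Γ(0))·(1 − exp(−∫_{−∞}^0 Γ(y) dy)) ≤ 1/Γ(0) < ∞; in particular the integral ∫_{−∞}^0 v^{−2}(y) dy is finite. -/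
/-!
Put `w = Γ v²`. The Riccati equation for `Γ` turns into the linear equation `w' = -Γ w`, so
`w x = Γ(0) exp (-∫₀ˣ Γ)` never vanishes, and `(1/w)' = Γ / w = 1 / v²`. Hence
`∫ₐ⁰ v⁻² = 1/w(0) - 1/w(a) = (1 - exp (-∫ₐ⁰ Γ)) / Γ(0) ≤ 1/Γ(0)`, and a uniform bound on the
integrals over `[a, 0]` of the positive function `v⁻²` gives its integrability on `(-∞, 0]`.
-/

open Real MeasureTheory intervalIntegral Filter

theorem eq_mul_exp_integral_of_hasDerivAt_s5 {w g : ℝ → ℝ} (hg : Continuous g)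
    (hw : ∀ x, HasDerivAt w (g x * w x) x) (a x : ℝ) :
    w x = w a * exp (∫ t in a..x, g t) := by
  have hG : ∀ y, HasDerivAt (fun y => ∫ t in a..y, g t) (g y) y := fun y =>
    integral_hasDerivAt_right (hg.intervalIntegrable _ _)
      hg.aestronglyMeasurable.stronglyMeasurableAtFilter hg.continuousAt
  have hu : ∀ y, HasDerivAt (fun y => w y * exp (-∫ t in a..y, g t)) 0 y := fun y =>
    ((hw y).mul (hG y).neg.exp).congr_deriv (by ring)
  have hconst := is_const_of_deriv_eq_zero (fun y => (hu y).differentiableAt)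
    (fun y => (hu y).deriv) x a
  simp only [integral_same, neg_zero, exp_zero, mul_one] at hconst
  rw [← hconst, mul_assoc, ← exp_add, neg_add_cancel, exp_zero, mul_one]

section Riccati

variable {v Γ : ℝ → ℝ} {x v' b : ℝ}

theorem hasDerivAt_mul_sq_of_riccati (hv : HasDerivAt v v' x)
    (hΓ : HasDerivAt Γ (-(Γ x) ^ 2 - (2 * v' / v x) * Γ x) x) (hvx : v x ≠ 0) :
    HasDerivAt (fun y => Γ y * v y ^ 2) (-Γ x * (Γ x * v x ^ 2)) x := by
  refine (hΓ.mul (hv.pow 2)).congr_deriv ?_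
  simp only [Pi.pow_apply]
  field_simp
  ring

theorem hasDerivAt_inv_mul_sq_of_riccati (hv : HasDerivAt v v' x)
    (hΓ : HasDerivAt Γ (-(Γ x) ^ 2 - (2 * v' / v x) * Γ x) x) (hvx : v x ≠ 0)
    (hΓx : Γ x ≠ 0) :
    HasDerivAt (fun y => (Γ y * v y ^ 2)⁻¹) (1 / v x ^ 2) x := by
  refine ((hasDerivAt_mul_sq_of_riccati hv hΓ hvx).inv (by positivity)).congr_deriv ?_
  field_simp

theorem mul_sq_eq_mul_exp_of_riccati (hv : Differentiable ℝ v) (hΓ : Differentiable ℝ Γ)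
    (hvne : ∀ x, v x ≠ 0) (hode : ∀ x, deriv Γ x = -(Γ x) ^ 2 - (2 * deriv v x / v x) * Γ x)
    (a x : ℝ) : Γ x * v x ^ 2 = Γ a * v a ^ 2 * exp (-∫ t in a..x, Γ t) := by
  have hw x :=
    hasDerivAt_mul_sq_of_riccati (hv x).hasDerivAt (hode x ▸ (hΓ x).hasDerivAt) (hvne x)
  rw [eq_mul_exp_integral_of_hasDerivAt_s5 (g := fun t => -Γ t) hΓ.continuous.neg hw a x,
    intervalIntegral.integral_neg]

theorem integral_one_div_sq_of_riccati (hv : Differentiable ℝ v) (hΓ : Differentiable ℝ Γ)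
    (hvne : ∀ x, v x ≠ 0) (hode : ∀ x, deriv Γ x = -(Γ x) ^ 2 - (2 * deriv v x / v x) * Γ x)
    (hΓb : Γ b ≠ 0) (a : ℝ) :
    ∫ y in a..b, 1 / v y ^ 2 = 1 / (Γ b * v b ^ 2) * (1 - exp (-∫ y in a..b, Γ y)) := by
  have hsol := mul_sq_eq_mul_exp_of_riccati hv hΓ hvne hode
  have hwne : ∀ x, Γ x * v x ^ 2 ≠ 0 := fun x => by
    rw [hsol b x]
    exact mul_ne_zero (mul_ne_zero hΓb (pow_ne_zero 2 (hvne b))) (exp_pos _).ne'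
  have hcont : Continuous fun y => 1 / v y ^ 2 :=
    continuous_const.div (hv.continuous.pow 2) fun y => pow_ne_zero 2 (hvne y)
  rw [integral_eq_sub_of_hasDerivAt
    (fun x _ => hasDerivAt_inv_mul_sq_of_riccati (hv x).hasDerivAt
      (hode x ▸ (hΓ x).hasDerivAt) (hvne x) (left_ne_zero_of_mul (hwne x)))
    (hcont.intervalIntegrable _ _), hsol a b]
  field_simp [hwne a]

end Riccati

section ImproperIntegral

variable {f : ℝ → ℝ} {b C : ℝ}

theorem integrableOn_Iic_of_intervalIntegral_le (hf : LocallyIntegrable f) (hf0 : ∀ x, 0 ≤ f x)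
    (hC : ∀ a < b, ∫ x in a..b, f x ≤ C) : IntegrableOn f (Set.Iic b) := by
  refine integrableOn_Iic_of_intervalIntegral_norm_bounded C b
    (a := fun n : ℕ => b - (n + 1)) (l := atTop)
    (fun n => (hf.integrableOn_isCompact isCompact_Icc).mono_set Set.Ioc_subset_Icc_self)
    (tendsto_atBot_add_const_left _ _ (tendsto_neg_atTop_atBot.comp
      (tendsto_atTop_add_const_right _ 1 tendsto_natCast_atTop_atTop))) ?_
  filter_upwards with n
  simp only [Real.norm_of_nonneg (hf0 _)]
  exact hC _ (by linarith [n.cast_nonneg (α := ℝ)])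

theorem tendsto_intervalIntegral_neg_natCast (hf : IntegrableOn f (Set.Iic b)) :
    Tendsto (fun n : ℕ => ∫ x in (b - n)..b, f x) atTop (nhds (∫ x in Set.Iic b, f x)) :=
  intervalIntegral_tendsto_integral_Iic b hf
    (tendsto_atBot_add_const_left _ _ (tendsto_neg_atTop_atBot.comp tendsto_natCast_atTop_atTop))

theorem integral_Iic_le_of_intervalIntegral_le (hf : IntegrableOn f (Set.Iic b))
    (hC : ∀ a < b, ∫ x in a..b, f x ≤ C) : ∫ x in Set.Iic b, f x ≤ C := by
  refine le_of_tendsto (tendsto_intervalIntegral_neg_natCast hf) ?_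
  filter_upwards [eventually_ge_atTop 1] with n hn
  exact hC _ (by linarith [show (1 : ℝ) ≤ n by exact_mod_cast hn])

end ImproperIntegral

theorem stmt5 (v Γ : ℝ → ℝ) (hv : ContDiff ℝ 1 v) (hvpos : ∀ x, 0 < v x)
    (hv0 : v 0 = 1) (hΓ : ContDiff ℝ 1 Γ)
    (hode : ∀ x, deriv Γ x = -(Γ x) ^ 2 - (2 * deriv v x / v x) * Γ x)
    (hΓ0 : 0 < Γ 0) :
    (∀ a : ℝ, a < 0 →
      ∫ y in a..(0:ℝ), 1 / (v y) ^ 2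
        = (1 / Γ 0) * (1 - Real.exp (-(∫ y in a..(0:ℝ), Γ y)))) ∧
    IntegrableOn (fun y => 1 / (v y) ^ 2) (Set.Iic 0) volume ∧
    Tendsto (fun n : ℕ => ∫ y in (-(n:ℝ))..(0:ℝ), 1 / (v y) ^ 2) atTop
      (nhds (∫ y in Set.Iic (0:ℝ), 1 / (v y) ^ 2)) ∧
    (∫ y in Set.Iic (0:ℝ), 1 / (v y) ^ 2) ≤ 1 / Γ 0 := by
  have hvne x := (hvpos x).ne'
  have hint a := integral_one_div_sq_of_riccati (hv.differentiable one_ne_zero)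
    (hΓ.differentiable one_ne_zero) hvne hode hΓ0.ne' a
  simp only [hv0, one_pow, mul_one] at hint
  have hbound : ∀ a < 0, ∫ y in a..(0:ℝ), 1 / v y ^ 2 ≤ 1 / Γ 0 := fun a _ => by
    rw [hint]
    exact mul_le_of_le_one_right (by positivity) (by linarith [exp_pos (-∫ y in a..0, Γ y)])
  have hinteg : IntegrableOn (fun y => 1 / v y ^ 2) (Set.Iic 0) :=
    integrableOn_Iic_of_intervalIntegral_le
      (continuous_const.div (hv.continuous.pow 2) fun y =>
        pow_ne_zero 2 (hvne y)).locallyIntegrable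
      (fun y => by positivity) hbound
  refine ⟨fun a _ => hint a, hinteg, ?_, integral_Iic_le_of_intervalIntegral_le hinteg hbound⟩
  simpa using tendsto_intervalIntegral_neg_natCast hinteg
end

section
/- Let u, v be positive C² solutions on ℝ of u'' + c_λ(x)u = 0 and v'' + c_δ(x)v = 0 respectively, where c_λ(x) − c_δ(x) = 2(λ−δ)/σ²(x) with λ > δ and σ²(x) > 0, and set Γ = u'/u − v'/v. Then Γ satisfies the Riccati equation Γ' = −Γ² − (2v'/v)Γ − 2(λ−δ)/σ², and if Γ(x₀) = 0 for some x₀, then Γ(x) > 0 for all x < x₀. -/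
/-!
The logarithmic derivative `p = f'/f` of a positive solution of `f'' = -c f` satisfies the Riccati
equation `p' = -c - p²`; subtracting the equations for `u` and `v` gives the one for `Γ`.
For the sign, `Γ = W / (u v)` with the Wronskian `W = u' v - u v'`, and `W' = (c_δ - c_λ) u v < 0`.
So `W` is strictly decreasing; it vanishes at a zero `x₀` of `Γ`, hence is positive to its left.
-/

open Real

noncomputable def wronskian (u v : ℝ → ℝ) (x : ℝ) : ℝ :=
  deriv u x * v x - u x * deriv v x

section SecondOrderODE

variable {u v f : ℝ → ℝ} {c x : ℝ}

theorem hasDerivAt_logDeriv_of_deriv_deriv_eq (hf : DifferentiableAt ℝ f x)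
    (hf' : DifferentiableAt ℝ (deriv f) x) (hfx : f x ≠ 0)
    (hode : deriv (deriv f) x = -c * f x) :
    HasDerivAt (fun y => deriv f y / f y) (-c - (deriv f x / f x) ^ 2) x := by
  refine (hf'.hasDerivAt.div hf.hasDerivAt hfx).congr_deriv ?_
  rw [hode]
  field_simp

theorem hasDerivAt_wronskian_s6 (hu : DifferentiableAt ℝ u x) (hu' : DifferentiableAt ℝ (deriv u) x)
    (hv : DifferentiableAt ℝ v x) (hv' : DifferentiableAt ℝ (deriv v) x) :
    HasDerivAt (wronskian u v) (deriv (deriv u) x * v x - u x * deriv (deriv v) x) x :=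
  ((hu'.hasDerivAt.mul hv.hasDerivAt).sub (hu.hasDerivAt.mul hv'.hasDerivAt)).congr_deriv (by ring)

theorem logDeriv_sub_logDeriv_eq_wronskian_div (hu : u x ≠ 0) (hv : v x ≠ 0) :
    deriv u x / u x - deriv v x / v x = wronskian u v x / (u x * v x) :=
  div_sub_div _ _ hu hv

theorem strictAnti_wronskian {a b : ℝ → ℝ} (hu : ContDiff ℝ 2 u) (hv : ContDiff ℝ 2 v)
    (hupos : ∀ x, 0 < u x) (hvpos : ∀ x, 0 < v x)
    (huode : ∀ x, deriv (deriv u) x = -a x * u x) (hvode : ∀ x, deriv (deriv v) x = -b x * v x)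
    (hba : ∀ x, b x < a x) :
    StrictAnti (wronskian u v) := by
  refine strictAnti_of_deriv_neg fun x => ?_
  rw [(hasDerivAt_wronskian_s6 (hu.differentiable two_ne_zero x) (hu.differentiable_deriv_two x)
    (hv.differentiable two_ne_zero x) (hv.differentiable_deriv_two x)).deriv, huode, hvode]
  have huv : 0 < u x * v x := mul_pos (hupos x) (hvpos x)
  nlinarith [hba x]

end SecondOrderODE

theorem stmt6_general (σ u v clam cdel : ℝ → ℝ) (lam δ : ℝ) (hld : δ < lam)
    (hσpos : ∀ x, 0 < σ x)
    (hdiff : ∀ x, clam x - cdel x = 2 * (lam - δ) / σ x ^ 2)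
    (hu : ContDiff ℝ 2 u) (hv : ContDiff ℝ 2 v)
    (hupos : ∀ x, 0 < u x) (hvpos : ∀ x, 0 < v x)
    (huode : ∀ x, deriv (deriv u) x = -(clam x) * u x)
    (hvode : ∀ x, deriv (deriv v) x = -(cdel x) * v x)
    (Γ : ℝ → ℝ) (hΓdef : ∀ x, Γ x = deriv u x / u x - deriv v x / v x) :
    (∀ x, deriv Γ x = -(Γ x) ^ 2 - (2 * deriv v x / v x) * Γ x
      - 2 * (lam - δ) / σ x ^ 2) ∧
    (∀ x₀ : ℝ, Γ x₀ = 0 → ∀ x < x₀, 0 < Γ x) := by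
  have hΓ : ∀ x, Γ x = wronskian u v x / (u x * v x) := fun x =>
    (hΓdef x).trans (logDeriv_sub_logDeriv_eq_wronskian_div (hupos x).ne' (hvpos x).ne')
  refine ⟨fun x => ?_, fun x₀ hx₀ x hx => ?_⟩
  · have hu' := hasDerivAt_logDeriv_of_deriv_deriv_eq (hu.differentiable two_ne_zero x)
      (hu.differentiable_deriv_two x) (hupos x).ne' (huode x)
    have hv' := hasDerivAt_logDeriv_of_deriv_deriv_eq (hv.differentiable two_ne_zero x)
      (hv.differentiable_deriv_two x) (hvpos x).ne' (hvode x)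
    rw [((hu'.sub hv').congr_of_eventuallyEq (.of_forall hΓdef)).deriv, hΓdef x, ← hdiff x]
    ring
  · have hcmp : ∀ x, cdel x < clam x := fun x => by
      have : 0 < 2 * (lam - δ) / σ x ^ 2 := div_pos (by linarith) (pow_pos (hσpos x) 2)
      linarith [hdiff x]
    have hW₀ : wronskian u v x₀ = 0 := by
      rw [hΓ, div_eq_zero_iff] at hx₀
      exact hx₀.resolve_right (mul_pos (hupos x₀) (hvpos x₀)).ne'
    have hWx : 0 < wronskian u v x :=
      hW₀ ▸ strictAnti_wronskian hu hv hupos hvpos huode hvode hcmp hx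
    rw [hΓ]
    exact div_pos hWx (mul_pos (hupos x) (hvpos x))

theorem stmt6 (σ u v clam cdel : ℝ → ℝ) (lam δ : ℝ) (hld : δ < lam)
    (hσ : Continuous σ) (hσpos : ∀ x, 0 < σ x)
    (hcl : Continuous clam) (hcd : Continuous cdel)
    (hdiff : ∀ x, clam x - cdel x = 2 * (lam - δ) / σ x ^ 2)
    (hu : ContDiff ℝ 2 u) (hv : ContDiff ℝ 2 v)
    (hupos : ∀ x, 0 < u x) (hvpos : ∀ x, 0 < v x)
    (huode : ∀ x, deriv (deriv u) x = -(clam x) * u x)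
    (hvode : ∀ x, deriv (deriv v) x = -(cdel x) * v x)
    (Γ : ℝ → ℝ) (hΓdef : ∀ x, Γ x = deriv u x / u x - deriv v x / v x) :
    (∀ x, deriv Γ x = -(Γ x) ^ 2 - (2 * deriv v x / v x) * Γ x
      - 2 * (lam - δ) / σ x ^ 2) ∧
    (∀ x₀ : ℝ, Γ x₀ = 0 → ∀ x < x₀, 0 < Γ x) :=
  stmt6_general σ u v clam cdel lam δ hld hσpos hdiff hu hv hupos hvpos huode hvode Γ hΓdef
end

section
/- For the geometric Brownian motion stock model, consider the ODE (1/2)σ²s²h''(s) + (r−δ)s h'(s) − r h(s) = −λ h(s) on (0,∞) with constants σ > 0, r, δ, λ ∈ ℝ. If λ < (1/2)(σ/2 − (r−δ)/σ)² + r, then every positive solution h with h(1) = 1 has the form h(s) = c·s^{l₁} + (1−c)·s^{l₂} for some c ∈ [0,1], where l_{1,2} = 1/2 − (r−δ)/σ² ∓ sqrt((1/2 − (r−δ)/σ²)² + 2(r−λ)/σ²). -/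
open Real Set

/-!
After division by `σ²/2` the equation is the Euler equation
`s²h'' + (1 - (l₁ + l₂)) s h' + l₁ l₂ h = 0`, and the bound on `λ` makes its characteristic
exponents `l₁ < l₂` real and distinct. The Euler operator factors as `(s d/ds - l₂)(s d/ds - l₁)`,
and `s f' = l f` forces `f = f(1) sˡ` on `(0, ∞)`; integrating the two factors (the second after
subtracting a multiple of `s^l₂`) gives `h = c s^l₁ + (1 - c) s^l₂`. With `x = s^(l₂ - l₁)`,
positivity of `h` says `c + (1 - c) x > 0` for all `x > 0`, which forces `c ∈ [0, 1]`.
-/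

theorem eq_mul_rpow_of_mul_hasDerivAt_eq {f f' : ℝ → ℝ} {a : ℝ}
    (hf : ∀ s > 0, HasDerivAt f (f' s) s) (hf' : ∀ s > 0, s * f' s = a * f s) :
    ∀ s > 0, f s = f 1 * s ^ a := by
  have hφ : ∀ s > 0, HasDerivAt (fun x => x ^ (-a) * f x) 0 s := by
    intro s hs
    have hpow : s ^ (-a - 1) * s = s ^ (-a) := by rw [← rpow_add_one hs.ne']; ring_nf
    refine ((hasDerivAt_rpow_const (p := -a) (Or.inl hs.ne')).mul (hf s hs)).congr_deriv ?_
    linear_combination s ^ (-a - 1) * hf' s hs - f' s * hpow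
  intro s hs
  have hconst : s ^ (-a) * f s = (1 : ℝ) ^ (-a) * f 1 :=
    isOpen_Ioi.is_const_of_deriv_eq_zero isPreconnected_Ioi
      (fun x hx => (hφ x hx).differentiableAt.differentiableWithinAt) (fun x hx => (hφ x hx).deriv)
      hs (mem_Ioi.2 one_pos)
  rw [one_rpow, one_mul, rpow_neg hs.le] at hconst
  rw [← hconst]
  field_simp [(rpow_pos_of_pos hs a).ne']

theorem exists_rpow_combination_of_euler {a b : ℝ} (hab : a ≠ b) {h h' h'' : ℝ → ℝ}
    (hd : ∀ s > 0, HasDerivAt h (h' s) s) (hd' : ∀ s > 0, HasDerivAt h' (h'' s) s)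
    (hode : ∀ s > 0, s ^ 2 * h'' s + (1 - (a + b)) * s * h' s + a * b * h s = 0) :
    ∃ A B : ℝ, ∀ s > 0, h s = A * s ^ a + B * s ^ b := by
  obtain ⟨K, hK⟩ : ∃ K, ∀ s > 0, s * h' s - a * h s = K * s ^ b :=
    ⟨_, eq_mul_rpow_of_mul_hasDerivAt_eq (f' := fun s => 1 * h' s + s * h'' s - a * h' s)
      (fun s hs => ((hasDerivAt_id s).mul (hd' s hs)).sub ((hd s hs).const_mul a))
      (fun s hs => by linear_combination hode s hs)⟩
  set k := K / (b - a)
  have hk : k * (b - a) = K := div_mul_cancel₀ _ (sub_ne_zero.2 hab.symm)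
  have hg := eq_mul_rpow_of_mul_hasDerivAt_eq (f := fun s => h s - k * s ^ b)
    (f' := fun s => h' s - k * (b * s ^ (b - 1))) (a := a)
    (fun s hs => (hd s hs).sub ((hasDerivAt_rpow_const (Or.inl hs.ne')).const_mul k))
    (fun s hs => by
      have hpow : s * s ^ (b - 1) = s ^ b := by rw [mul_comm, ← rpow_add_one hs.ne']; ring_nf
      linear_combination hK s hs - k * b * hpow - s ^ b * hk)
  refine ⟨h 1 - k, k, fun s hs => ?_⟩
  have := hg s hs
  simp only [one_rpow, mul_one] at this
  linarith

theorem mem_Icc_of_forall_pos_add_sub_mul {c : ℝ} (hc : ∀ x > 0, 0 < c + (1 - c) * x) :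
    c ∈ Icc 0 1 := by
  constructor <;> by_contra! hlt
  -- at `x = -c / (1 - c)`, resp. `x = c / (c - 1)`, the affine function vanishes
  · have := hc (-c / (1 - c)) (div_pos (by linarith) (by linarith))
    rw [mul_div_cancel₀ _ (by linarith)] at this
    linarith
  · have := hc (c / (c - 1)) (div_pos (by linarith) (by linarith))
    rw [show (1 - c) * (c / (c - 1)) = -c by field_simp [(by linarith : c - 1 ≠ 0)]; ring] at this
    linarith

theorem mem_Icc_of_forall_pos_rpow_combination {a b c : ℝ} (hab : a ≠ b)
    (hpos : ∀ s > 0, 0 < c * s ^ a + (1 - c) * s ^ b) : c ∈ Icc 0 1 := by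
  refine mem_Icc_of_forall_pos_add_sub_mul fun x hx => ?_
  set s := x ^ (b - a)⁻¹
  have hs : 0 < s := rpow_pos_of_pos hx _
  have hsx : s ^ (b - a) = x := by
    rw [← rpow_mul hx.le, inv_mul_cancel₀ (sub_ne_zero.2 hab.symm), rpow_one]
  have hfactor : c * s ^ a + (1 - c) * s ^ b = s ^ a * (c + (1 - c) * x) := by
    rw [← hsx, ← add_sub_cancel a b, rpow_add hs, add_sub_cancel_left]; ring
  exact pos_of_mul_pos_right (hfactor ▸ hpos s hs) (rpow_pos_of_pos hs a).le

theorem hasDerivAt_deriv_of_contDiffOn_two {h : ℝ → ℝ} {U : Set ℝ} (hU : IsOpen U)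
    (hh : ContDiffOn ℝ 2 h U) {s : ℝ} (hs : s ∈ U) :
    HasDerivAt h (deriv h s) s ∧ HasDerivAt (deriv h) (deriv (deriv h) s) s := by
  have hh' : ContDiffOn ℝ 1 (deriv h) U :=
    ((contDiffOn_succ_iff_deriv_of_isOpen (n := 1) hU).1 hh).2.2
  exact ⟨((hh.differentiableOn (by norm_num)).differentiableAt (hU.mem_nhds hs)).hasDerivAt,
    ((hh'.differentiableOn (by norm_num)).differentiableAt (hU.mem_nhds hs)).hasDerivAt⟩

theorem lt_and_add_and_mul_of_eq_sub_sqrt_of_eq_add_sqrt {m q l₁ l₂ : ℝ} (hD : 0 < m ^ 2 + q)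
    (hl₁ : l₁ = m - sqrt (m ^ 2 + q)) (hl₂ : l₂ = m + sqrt (m ^ 2 + q)) :
    l₁ < l₂ ∧ l₁ + l₂ = 2 * m ∧ l₁ * l₂ = -q := by
  subst hl₁ hl₂
  refine ⟨by linarith [sqrt_pos.2 hD], by ring, ?_⟩
  linear_combination -sq_sqrt hD.le

theorem discriminant_pos_of_lt {σ r δ lam : ℝ} (hσ : 0 < σ)
    (hlam : lam < (1/2) * (σ/2 - (r - δ)/σ) ^ 2 + r) :
    0 < (1/2 - (r - δ)/σ^2) ^ 2 + 2 * (r - lam)/σ^2 := by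
  have hscaled : 0 < σ ^ 2 * (1/2 - (r - δ)/σ^2) ^ 2 + 2 * (r - lam) := by
    have : (1/2) * (σ/2 - (r - δ)/σ) ^ 2 = σ ^ 2 / 2 * (1/2 - (r - δ)/σ^2) ^ 2 := by field_simp
    linarith
  simpa only [add_div, mul_div_cancel_left₀ _ (pow_pos hσ 2).ne'] using
    div_pos hscaled (pow_pos hσ 2)

theorem stmt8 (σ r δ lam : ℝ) (hσ : 0 < σ)
    (hlam : lam < (1/2) * (σ/2 - (r - δ)/σ) ^ 2 + r)
    (h : ℝ → ℝ) (hh : ContDiffOn ℝ 2 h (Set.Ioi 0))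
    (hpos : ∀ s > (0:ℝ), 0 < h s) (h1 : h 1 = 1)
    (hode : ∀ s > (0:ℝ),
      (1/2) * σ ^ 2 * s ^ 2 * deriv (deriv h) s + (r - δ) * s * deriv h s - r * h s
        = -lam * h s)
    (l₁ l₂ : ℝ)
    (hl₁ : l₁ = 1/2 - (r - δ)/σ^2
      - Real.sqrt ((1/2 - (r - δ)/σ^2) ^ 2 + 2 * (r - lam)/σ^2))
    (hl₂ : l₂ = 1/2 - (r - δ)/σ^2
      + Real.sqrt ((1/2 - (r - δ)/σ^2) ^ 2 + 2 * (r - lam)/σ^2)) :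
    ∃ c ∈ Set.Icc (0:ℝ) 1, ∀ s > (0:ℝ), h s = c * s ^ l₁ + (1 - c) * s ^ l₂ := by
  have hσ2 : σ ^ 2 ≠ 0 := by positivity
  have hD := discriminant_pos_of_lt hσ hlam
  obtain ⟨hlt, hsum, hprod⟩ := lt_and_add_and_mul_of_eq_sub_sqrt_of_eq_add_sqrt hD hl₁ hl₂
  have heuler : ∀ s > 0,
      s ^ 2 * deriv (deriv h) s + (1 - (l₁ + l₂)) * s * deriv h s + l₁ * l₂ * h s = 0 := by
    intro s hs
    refine mul_left_cancel₀ hσ2 ?_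
    rw [hsum, hprod]
    field_simp
    linear_combination 2 * hode s hs
  obtain ⟨A, B, hAB⟩ := exists_rpow_combination_of_euler hlt.ne
    (fun s hs => (hasDerivAt_deriv_of_contDiffOn_two isOpen_Ioi hh hs).1)
    (fun s hs => (hasDerivAt_deriv_of_contDiffOn_two isOpen_Ioi hh hs).2) heuler
  obtain rfl : B = 1 - A := by
    have := hAB 1 one_pos
    rw [one_rpow, one_rpow, h1] at this
    linarith
  exact ⟨A, mem_Icc_of_forall_pos_rpow_combination hlt.ne fun s hs => hAB s hs ▸ hpos s hs, hAB⟩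
end

section
/- For the Euler ODE (1/2)σ²s²h''(s) + (r−δ)s h'(s) − r h(s) = −λ h(s) on (0,∞), if λ > (1/2)(σ/2 − (r−δ)/σ)² + r, then there is no positive C² solution h on (0,∞). -/
/-!
For a nonvanishing solution `h` of the Euler equation `a s² h'' + b s h' + c h = 0`, the function
`u s = s h'(s) / h(s) - m` with `m = (a - b) / (2a)` satisfies the Riccati equation
`s u' = -(u² + β²)`, where `-β² < 0` is the discriminant of the characteristic polynomial
`a p (p - 1) + b p + c` divided by `4a²`. Along a solution, `arctan (u / β) + β log s` is constant,
which is impossible on all of `(0, ∞)`: `arctan` is bounded while `β log s` is not.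
-/

open Real Set

theorem not_forall_hasDerivAt_riccati {u : ℝ → ℝ} {m β : ℝ} (hβ : 0 < β) :
    ¬ ∀ s > 0, HasDerivAt u (-((u s - m) ^ 2 + β ^ 2) / s) s := by
  intro hu
  set φ : ℝ → ℝ := fun s => arctan ((u s - m) / β) + β * log s
  have hφ : ∀ s ∈ Ioi (0 : ℝ), HasDerivAt φ 0 s := by
    intro s (hs : 0 < s)
    have := (((hu s hs).sub_const m).div_const β).arctan.add
      ((hasDerivAt_log hs.ne').const_mul β)
    refine this.congr_deriv ?_
    field_simp
    ring
  have hconst : φ (exp (π / β)) = φ 1 :=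
    isOpen_Ioi.is_const_of_deriv_eq_zero isPreconnected_Ioi
      (fun s hs => (hφ s hs).differentiableAt.differentiableWithinAt)
      (fun s hs => (hφ s hs).deriv) (exp_pos _) (mem_Ioi.2 one_pos)
  have hlog : β * log (exp (π / β)) = π := by rw [log_exp]; field_simp
  simp only [φ, hlog, log_one, mul_zero, add_zero] at hconst
  linarith [neg_pi_div_two_lt_arctan ((u (exp (π / β)) - m) / β),
    arctan_lt_pi_div_two ((u 1 - m) / β)]

theorem hasDerivAt_riccati_of_euler {h h' : ℝ → ℝ} {a b c s h'' : ℝ} (ha : a ≠ 0) (hs : s ≠ 0)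
    (hh : h s ≠ 0) (h₁ : HasDerivAt h (h' s) s) (h₂ : HasDerivAt h' h'' s)
    (hode : a * s ^ 2 * h'' + b * s * h' s + c * h s = 0) :
    HasDerivAt (fun t => t * h' t / h t)
      (-((s * h' s / h s - (a - b) / (2 * a)) ^ 2 + (c / a - ((a - b) / (2 * a)) ^ 2)) / s) s := by
  have hh'' : h'' = -(b * s * h' s + c * h s) / (a * s ^ 2) := by
    field_simp
    linarith
  refine (((hasDerivAt_id s).mul h₂).div h₁ hh).congr_deriv ?_
  rw [hh'', Pi.mul_apply, id]
  field_simp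
  ring

theorem ContDiffOn.hasDerivAt_deriv_of_isOpen {𝕜 : Type*} [NontriviallyNormedField 𝕜]
    {f : 𝕜 → 𝕜} {U : Set 𝕜} {x : 𝕜} (hf : ContDiffOn 𝕜 2 f U) (hU : IsOpen U) (hx : x ∈ U) :
    HasDerivAt (deriv f) (deriv (deriv f) x) x :=
  (((hf.deriv_of_isOpen hU (m := 1) (by norm_num)).differentiableOn one_ne_zero).differentiableAt
    (hU.mem_nhds hx)).hasDerivAt

theorem stmt10 (σ r δ lam : ℝ) (hσ : 0 < σ)
    (hlam : lam > (1/2) * (σ/2 - (r - δ)/σ) ^ 2 + r) :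
    ¬ ∃ h : ℝ → ℝ, ContDiffOn ℝ 2 h (Set.Ioi 0) ∧
      (∀ s > (0:ℝ), 0 < h s) ∧
      (∀ s > (0:ℝ),
        (1/2) * σ ^ 2 * s ^ 2 * deriv (deriv h) s + (r - δ) * s * deriv h s - r * h s
          = -lam * h s) := by
  rintro ⟨h, hC2, hpos, hode⟩
  set a : ℝ := σ ^ 2 / 2
  set m : ℝ := (a - (r - δ)) / (2 * a)
  have hdisc : 0 < (lam - r) / a - m ^ 2 := by
    have hm : m = 1 / 2 - (r - δ) / σ ^ 2 := by simp only [m, a]; field_simp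
    rw [hm, sub_pos, lt_div_iff₀ (by positivity)]
    have hquad : (1/2) * (σ/2 - (r - δ)/σ) ^ 2 = (1 / 2 - (r - δ) / σ ^ 2) ^ 2 * a := by
      simp only [a]; field_simp
    linarith
  obtain ⟨β, hβ, hβ2⟩ : ∃ β > 0, β ^ 2 = (lam - r) / a - m ^ 2 :=
    ⟨√((lam - r) / a - m ^ 2), sqrt_pos.2 hdisc, sq_sqrt hdisc.le⟩
  refine not_forall_hasDerivAt_riccati (u := fun t => t * deriv h t / h t) (m := m) hβ
    fun s hs => ?_
  rw [hβ2]
  refine hasDerivAt_riccati_of_euler (by positivity) hs.ne' (hpos s hs).ne'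
    ((hC2.differentiableOn two_ne_zero s hs).differentiableAt (isOpen_Ioi.mem_nhds hs)).hasDerivAt
    (hC2.hasDerivAt_deriv_of_isOpen isOpen_Ioi hs) ?_
  linear_combination hode s hs
end
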